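/- arXiv:1103.3588 — 4 statements merged into one kernel-verified Lean document; each statement's English description precedes it below -/
import Mathlib

section
/- Let H be an induced subgraph of a connected simple graph G such that diam(H) = 2 and β(H) = n(H) − t for some positive integer t. Then β(G) ≤ n(G) − t. -/
namespace PaperMetricDim

open SimpleGraph

variable {V : Type*}

/-- A set `W` of vertices resolves the graph `G`: any two distinct vertices have
different distance to some vertex of `W`. -/
def Resolves (G : SimpleGraph V) (W : Set V) : Prop :=
  ∀ u v : V, u ≠ v → ∃ w ∈ W, G.dist u w ≠ G.dist v w

/-- The metric dimension of `G`: the minimum cardinality of a resolving set. -/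
noncomputable def metricDim (G : SimpleGraph V) : ℕ :=
  sInf {k : ℕ | ∃ W : Set V, Resolves G W ∧ W.ncard = k}

/-- `G` is connected and has diameter exactly `d`. -/
def diamEq (G : SimpleGraph V) (d : ℕ) : Prop :=
  G.Connected ∧ (∀ u v : V, G.dist u v ≤ d) ∧ ∃ u v : V, G.dist u v = d

/-- A set of vertices is homogeneous if it induces a complete or an empty subgraph. -/
def Homogeneous (G : SimpleGraph V) (S : Set V) : Prop :=
  (∀ a ∈ S, ∀ b ∈ S, a ≠ b → G.Adj a b) ∨ (∀ a ∈ S, ∀ b ∈ S, ¬ G.Adj a b)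

/-- Two distinct vertices are twins: they have the same neighbours apart from
each other. -/
def Twins (G : SimpleGraph V) (u v : V) : Prop :=
  u ≠ v ∧ G.neighborSet u \ {v} = G.neighborSet v \ {u}

/-- The twin equivalence relation: equal or twins. -/
def twinRel (G : SimpleGraph V) (u v : V) : Prop := u = v ∨ Twins G u v

/-- The twin class of a vertex. -/
def twinClass (G : SimpleGraph V) (v : V) : Set V := {u : V | twinRel G v u}

/-- The vertices of the twin graph: twin equivalence classes. -/
def TwinVertex (G : SimpleGraph V) : Type _ := {S : Set V // ∃ v : V, S = twinClass G v}

/-- The twin graph `G*` of `G`: twin classes, two distinct classes being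
adjacent iff (some, equivalently all) representatives are adjacent in `G`. -/
def twinGraph (G : SimpleGraph V) : SimpleGraph (TwinVertex G) where
  Adj A B := A ≠ B ∧ ∃ a ∈ A.1, ∃ b ∈ B.1, G.Adj a b
  symm := by
    constructor
    rintro A B ⟨hne, a, ha, b, hb, hab⟩
    exact ⟨hne.symm, b, hb, a, ha, hab.symm⟩
  loopless := by constructor; rintro A ⟨hne, -⟩; exact hne rfl

/-- The twin class of `v`, as a vertex of the twin graph. -/
def cls (G : SimpleGraph V) (v : V) : TwinVertex G := ⟨twinClass G v, v, rfl⟩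

/-- A twin-graph vertex of type (1): a singleton class. -/
def typeOne (G : SimpleGraph V) (A : TwinVertex G) : Prop := ∃ v : V, A.1 = {v}

/-- A twin-graph vertex of type (K): a class with at least two vertices inducing
a complete subgraph. -/
def typeK (G : SimpleGraph V) (A : TwinVertex G) : Prop :=
  A.1.Nontrivial ∧ ∀ a ∈ A.1, ∀ b ∈ A.1, a ≠ b → G.Adj a b

/-- A twin-graph vertex of type (N): a class with at least two vertices inducing
an empty subgraph. -/
def typeN (G : SimpleGraph V) (A : TwinVertex G) : Prop :=
  A.1.Nontrivial ∧ ∀ a ∈ A.1, ∀ b ∈ A.1, ¬ G.Adj a b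

/-- Type (1K): type (1) or type (K). -/
def type1K (G : SimpleGraph V) (A : TwinVertex G) : Prop := typeOne G A ∨ typeK G A

/-- Type (1N): type (1) or type (N). -/
def type1N (G : SimpleGraph V) (A : TwinVertex G) : Prop := typeOne G A ∨ typeN G A

/-- Type (KN): type (K) or type (N). -/
def typeKN (G : SimpleGraph V) (A : TwinVertex G) : Prop := typeK G A ∨ typeN G A

/-- `Γ_i(v)`: the set of vertices at distance `i` from `v`. -/
def Gamma (G : SimpleGraph V) (i : ℕ) (v : V) : Set V := {u : V | G.dist u v = i}

/-- `Γ_i^*(v^*)`: the set of twin-graph vertices at distance `i` from `v^*`. -/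
def GammaStar (G : SimpleGraph V) (i : ℕ) (v : V) : Set (TwinVertex G) :=
  {A : TwinVertex G | (twinGraph G).dist A (cls G v) = i}

/-- `R_1(v)`: neighbours of `v` having a neighbour at distance 2 from `v`. -/
def R1 (G : SimpleGraph V) (v : V) : Set V :=
  {x ∈ Gamma G 1 v | ∃ y ∈ Gamma G 2 v, G.Adj x y}

/-- `R_2(v) = Γ_1(v) \ R_1(v)`. -/
def R2 (G : SimpleGraph V) (v : V) : Set V := Gamma G 1 v \ R1 G v

/-- `R_1^*(v^*)`: twin-graph neighbours of `v^*` having a neighbour in `Γ_2^*(v^*)`. -/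
def R1Star (G : SimpleGraph V) (v : V) : Set (TwinVertex G) :=
  {A ∈ GammaStar G 1 v | ∃ B ∈ GammaStar G 2 v, (twinGraph G).Adj A B}

/-- `R_2^*(v^*) = Γ_1^*(v^*) \ R_1^*(v^*)`. -/
def R2Star (G : SimpleGraph V) (v : V) : Set (TwinVertex G) :=
  GammaStar G 1 v \ R1Star G v

/-- `M_1(x) = Γ_1(v) ∩ Γ_1(x)` (for `x ∈ Γ_1(v)`). -/
def M1 (G : SimpleGraph V) (v x : V) : Set V := Gamma G 1 v ∩ Gamma G 1 x

/-- `M_2(x) = Γ_1(v) ∩ Γ_2(x)` (for `x ∈ Γ_1(v)`). -/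
def M2 (G : SimpleGraph V) (v x : V) : Set V := Gamma G 1 v ∩ Gamma G 2 x

/-- Structure `G_1`: the twin graph is `K_3` and has at most one vertex of type (1K). -/
def structG1 (G : SimpleGraph V) : Prop :=
  ∃ a b c : TwinVertex G, a ≠ b ∧ a ≠ c ∧ b ≠ c ∧
    (∀ X : TwinVertex G, X = a ∨ X = b ∨ X = c) ∧
    (twinGraph G).Adj a b ∧ (twinGraph G).Adj a c ∧ (twinGraph G).Adj b c ∧
    (∀ X Y : TwinVertex G, type1K G X → type1K G Y → X = Y)

/-- Structure `G_2`: the twin graph is the path `P_3` with (a) centre of type (N)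
and some leaf of type (K), or (b) one leaf of type (K) and the other of type (KN). -/
def structG2 (G : SimpleGraph V) : Prop :=
  ∃ a b c : TwinVertex G, a ≠ b ∧ a ≠ c ∧ b ≠ c ∧
    (∀ X : TwinVertex G, X = a ∨ X = b ∨ X = c) ∧
    (twinGraph G).Adj a b ∧ (twinGraph G).Adj b c ∧ ¬ (twinGraph G).Adj a c ∧
    ((typeN G b ∧ (typeK G a ∨ typeK G c)) ∨
     (typeK G a ∧ typeKN G c) ∨ (typeK G c ∧ typeKN G a))

/-- Structure `G_3`: the twin graph is the paw, the triangle being `u, p, q` with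
the pendant vertex `l` attached to `u`; `p` is of type (N), `q` of type (1K),
`l` of type (1N); and if `q` is of type (K) then neither `l` nor `u` is of type (N). -/
def structG3 (G : SimpleGraph V) : Prop :=
  ∃ u p q l : TwinVertex G,
    u ≠ p ∧ u ≠ q ∧ u ≠ l ∧ p ≠ q ∧ p ≠ l ∧ q ≠ l ∧
    (∀ X : TwinVertex G, X = u ∨ X = p ∨ X = q ∨ X = l) ∧
    (twinGraph G).Adj u p ∧ (twinGraph G).Adj u q ∧ (twinGraph G).Adj p q ∧
    (twinGraph G).Adj u l ∧ ¬ (twinGraph G).Adj p l ∧ ¬ (twinGraph G).Adj q l ∧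
    typeN G p ∧ type1K G q ∧ type1N G l ∧
    (typeK G q → ¬ typeN G l ∧ ¬ typeN G u)

/-- Structure `G_4`: the twin graph is the cycle `C_5` and every vertex is of type (1). -/
def structG4 (G : SimpleGraph V) : Prop :=
  ∃ v0 v1 v2 v3 v4 : TwinVertex G,
    v0 ≠ v1 ∧ v0 ≠ v2 ∧ v0 ≠ v3 ∧ v0 ≠ v4 ∧ v1 ≠ v2 ∧ v1 ≠ v3 ∧ v1 ≠ v4 ∧
    v2 ≠ v3 ∧ v2 ≠ v4 ∧ v3 ≠ v4 ∧
    (∀ X : TwinVertex G, X = v0 ∨ X = v1 ∨ X = v2 ∨ X = v3 ∨ X = v4) ∧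
    (twinGraph G).Adj v0 v1 ∧ (twinGraph G).Adj v1 v2 ∧ (twinGraph G).Adj v2 v3 ∧
    (twinGraph G).Adj v3 v4 ∧ (twinGraph G).Adj v4 v0 ∧
    ¬ (twinGraph G).Adj v0 v2 ∧ ¬ (twinGraph G).Adj v1 v3 ∧ ¬ (twinGraph G).Adj v2 v4 ∧
    ¬ (twinGraph G).Adj v3 v0 ∧ ¬ (twinGraph G).Adj v4 v1 ∧
    (∀ X : TwinVertex G, typeOne G X)

/-- Structure `G_5`: the twin graph is `C_5` with one chord (cycle `v0 v1 v2 v3 v4`,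
chord `v0 v2`); the two adjacent degree-2 vertices `v3, v4` are of type (1), the
other vertices of type (1K). -/
def structG5 (G : SimpleGraph V) : Prop :=
  ∃ v0 v1 v2 v3 v4 : TwinVertex G,
    v0 ≠ v1 ∧ v0 ≠ v2 ∧ v0 ≠ v3 ∧ v0 ≠ v4 ∧ v1 ≠ v2 ∧ v1 ≠ v3 ∧ v1 ≠ v4 ∧
    v2 ≠ v3 ∧ v2 ≠ v4 ∧ v3 ≠ v4 ∧
    (∀ X : TwinVertex G, X = v0 ∨ X = v1 ∨ X = v2 ∨ X = v3 ∨ X = v4) ∧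
    (twinGraph G).Adj v0 v1 ∧ (twinGraph G).Adj v1 v2 ∧ (twinGraph G).Adj v2 v3 ∧
    (twinGraph G).Adj v3 v4 ∧ (twinGraph G).Adj v4 v0 ∧ (twinGraph G).Adj v0 v2 ∧
    ¬ (twinGraph G).Adj v1 v3 ∧ ¬ (twinGraph G).Adj v1 v4 ∧ ¬ (twinGraph G).Adj v2 v4 ∧
    typeOne G v3 ∧ typeOne G v4 ∧ type1K G v0 ∧ type1K G v1 ∧ type1K G v2

/-- Structure `G_6`: the twin graph is `C_5` with two adjacent chords (cycle
`v0 v1 v2 v3 v4`, chords `v0 v2` and `v0 v3`, so `v0` has degree 4); `v0` is of any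
type, the other vertices of type (1K); no two non-adjacent vertices are both of
type (K), and no two adjacent vertices have the different types (K) and (N). -/
def structG6 (G : SimpleGraph V) : Prop :=
  ∃ v0 v1 v2 v3 v4 : TwinVertex G,
    v0 ≠ v1 ∧ v0 ≠ v2 ∧ v0 ≠ v3 ∧ v0 ≠ v4 ∧ v1 ≠ v2 ∧ v1 ≠ v3 ∧ v1 ≠ v4 ∧
    v2 ≠ v3 ∧ v2 ≠ v4 ∧ v3 ≠ v4 ∧
    (∀ X : TwinVertex G, X = v0 ∨ X = v1 ∨ X = v2 ∨ X = v3 ∨ X = v4) ∧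
    (twinGraph G).Adj v0 v1 ∧ (twinGraph G).Adj v1 v2 ∧ (twinGraph G).Adj v2 v3 ∧
    (twinGraph G).Adj v3 v4 ∧ (twinGraph G).Adj v4 v0 ∧ (twinGraph G).Adj v0 v2 ∧
    (twinGraph G).Adj v0 v3 ∧
    ¬ (twinGraph G).Adj v1 v3 ∧ ¬ (twinGraph G).Adj v1 v4 ∧ ¬ (twinGraph G).Adj v2 v4 ∧
    type1K G v1 ∧ type1K G v2 ∧ type1K G v3 ∧ type1K G v4 ∧
    (∀ X Y : TwinVertex G, X ≠ Y → ¬ (twinGraph G).Adj X Y →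
      ¬ (typeK G X ∧ typeK G Y)) ∧
    (∀ X Y : TwinVertex G, (twinGraph G).Adj X Y → ¬ (typeK G X ∧ typeN G Y))

/-- Structure `G_7`: the twin graph is the kite (`K_4` minus an edge, vertices
`a, b` of degree 3 in the kite and `c, d` the non-adjacent pair) with a pendant
vertex `l` attached to the degree-3 vertex `a`; `l` is of type (1), `a` and `b`
are of type (1K), one of `c, d` is of type (K) and the other of type (1). -/
def structG7 (G : SimpleGraph V) : Prop :=
  ∃ a b c d l : TwinVertex G,
    a ≠ b ∧ a ≠ c ∧ a ≠ d ∧ a ≠ l ∧ b ≠ c ∧ b ≠ d ∧ b ≠ l ∧ c ≠ d ∧ c ≠ l ∧ d ≠ l ∧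
    (∀ X : TwinVertex G, X = a ∨ X = b ∨ X = c ∨ X = d ∨ X = l) ∧
    (twinGraph G).Adj a b ∧ (twinGraph G).Adj a c ∧ (twinGraph G).Adj a d ∧
    (twinGraph G).Adj b c ∧ (twinGraph G).Adj b d ∧ (twinGraph G).Adj a l ∧
    ¬ (twinGraph G).Adj c d ∧ ¬ (twinGraph G).Adj b l ∧ ¬ (twinGraph G).Adj c l ∧
    ¬ (twinGraph G).Adj d l ∧
    typeOne G l ∧ type1K G a ∧ type1K G b ∧ typeK G c ∧ typeOne G d

/-- Structure `G_8`: the twin graph is the kite (`K_4` minus an edge, `a, b` of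
degree 3 and `c, d` the non-adjacent degree-2 pair); one degree-2 vertex `c` is of
type (K) and the other `d` of type (1); one degree-3 vertex `a` is of type (N)
and the other `b` of type (1K). -/
def structG8 (G : SimpleGraph V) : Prop :=
  ∃ a b c d : TwinVertex G,
    a ≠ b ∧ a ≠ c ∧ a ≠ d ∧ b ≠ c ∧ b ≠ d ∧ c ≠ d ∧
    (∀ X : TwinVertex G, X = a ∨ X = b ∨ X = c ∨ X = d) ∧
    (twinGraph G).Adj a b ∧ (twinGraph G).Adj a c ∧ (twinGraph G).Adj a d ∧
    (twinGraph G).Adj b c ∧ (twinGraph G).Adj b d ∧ ¬ (twinGraph G).Adj c d ∧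
    typeN G a ∧ type1K G b ∧ typeK G c ∧ typeOne G d

/-- Structure `G_9`: the twin graph is `C_4`, two adjacent vertices of type (K)
and the other two of type (1). -/
def structG9 (G : SimpleGraph V) : Prop :=
  ∃ v0 v1 v2 v3 : TwinVertex G,
    v0 ≠ v1 ∧ v0 ≠ v2 ∧ v0 ≠ v3 ∧ v1 ≠ v2 ∧ v1 ≠ v3 ∧ v2 ≠ v3 ∧
    (∀ X : TwinVertex G, X = v0 ∨ X = v1 ∨ X = v2 ∨ X = v3) ∧
    (twinGraph G).Adj v0 v1 ∧ (twinGraph G).Adj v1 v2 ∧ (twinGraph G).Adj v2 v3 ∧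
    (twinGraph G).Adj v3 v0 ∧ ¬ (twinGraph G).Adj v0 v2 ∧ ¬ (twinGraph G).Adj v1 v3 ∧
    typeK G v0 ∧ typeK G v1 ∧ typeOne G v2 ∧ typeOne G v3

/-- Structure `G_10`: the twin graph is the wheel `C_4 ∨ K_1` (hub `h`, rim
`v0 v1 v2 v3`); two adjacent rim (degree-3) vertices `v0, v1` are of type (K), the
hub is of type (1K), and the other vertices of type (1). -/
def structG10 (G : SimpleGraph V) : Prop :=
  ∃ h v0 v1 v2 v3 : TwinVertex G,
    h ≠ v0 ∧ h ≠ v1 ∧ h ≠ v2 ∧ h ≠ v3 ∧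
    v0 ≠ v1 ∧ v0 ≠ v2 ∧ v0 ≠ v3 ∧ v1 ≠ v2 ∧ v1 ≠ v3 ∧ v2 ≠ v3 ∧
    (∀ X : TwinVertex G, X = h ∨ X = v0 ∨ X = v1 ∨ X = v2 ∨ X = v3) ∧
    (twinGraph G).Adj h v0 ∧ (twinGraph G).Adj h v1 ∧ (twinGraph G).Adj h v2 ∧
    (twinGraph G).Adj h v3 ∧
    (twinGraph G).Adj v0 v1 ∧ (twinGraph G).Adj v1 v2 ∧ (twinGraph G).Adj v2 v3 ∧
    (twinGraph G).Adj v3 v0 ∧ ¬ (twinGraph G).Adj v0 v2 ∧ ¬ (twinGraph G).Adj v1 v3 ∧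
    typeK G v0 ∧ typeK G v1 ∧ type1K G h ∧ typeOne G v2 ∧ typeOne G v3

/-!
Let `R` be a metric basis of `H = G[s]` and delete from `V(G)` the `t` vertices of `s`
outside `R`. Every remaining vertex is separated from all others by itself. Two deleted
vertices are separated in `H` by some `w ∈ R`, and since `diam H ≤ 2` we have
`d_H = min d_G 2` on `s`, so `w` separates them in `G` as well.
-/

section

variable {G : SimpleGraph V}

theorem resolves_of_forall_notMem {W : Set V} (hG : G.Connected)
    (h : ∀ u ∉ W, ∀ v ∉ W, u ≠ v → ∃ w ∈ W, G.dist u w ≠ G.dist v w) :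
    Resolves G W := by
  intro u v huv
  by_cases hu : u ∈ W
  · exact ⟨u, hu, by rw [SimpleGraph.dist_self]; exact (hG.pos_dist_of_ne huv.symm).ne⟩
  by_cases hv : v ∈ W
  · exact ⟨v, hv, by rw [SimpleGraph.dist_self]; exact (hG.pos_dist_of_ne huv).ne'⟩
  exact h u hu v hv huv

theorem Resolves.nonempty {W : Set V} (hW : Resolves G W) {u v : V} (huv : u ≠ v) :
    W.Nonempty :=
  let ⟨w, hw, _⟩ := hW u v huv
  ⟨w, hw⟩

theorem metricDim_le_ncard {W : Set V} (hW : Resolves G W) : metricDim G ≤ W.ncard :=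
  Nat.sInf_le ⟨W, hW, rfl⟩

theorem exists_resolves_ncard_eq_metricDim (hG : G.Connected) :
    ∃ W : Set V, Resolves G W ∧ W.ncard = metricDim G :=
  Nat.sInf_mem (s := {k | ∃ W : Set V, Resolves G W ∧ W.ncard = k})
    ⟨_, Set.univ, resolves_of_forall_notMem hG fun u hu => absurd (Set.mem_univ u) hu, rfl⟩

theorem _root_.SimpleGraph.Connected.min_dist_two_eq [DecidableEq V] [DecidableRel G.Adj]
    (hG : G.Connected) (u v : V) :
    min (G.dist u v) 2 = if u = v then 0 else if G.Adj u v then 1 else 2 := by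
  split_ifs with huv hadj
  · simp [huv]
  · simp [dist_eq_one_iff_adj.2 hadj]
  · have h0 := hG.pos_dist_of_ne huv
    have h1 : G.dist u v ≠ 1 := fun h => hadj (dist_eq_one_iff_adj.1 h)
    omega

theorem dist_induce_eq_min_two {s : Set V} (hG : G.Connected) (hH : (G.induce s).Connected)
    (hle : ∀ a b : s, (G.induce s).dist a b ≤ 2) (a b : s) :
    (G.induce s).dist a b = min (G.dist a b) 2 := by
  classical
  rw [← min_eq_left (hle a b), hH.min_dist_two_eq, hG.min_dist_two_eq]
  simp [Subtype.ext_iff]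

theorem resolves_compl_image_compl {s : Set V} (hG : G.Connected)
    (hH : (G.induce s).Connected) (hle : ∀ a b : s, (G.induce s).dist a b ≤ 2)
    {R : Set s} (hR : Resolves (G.induce s) R) :
    Resolves G (Subtype.val '' Rᶜ)ᶜ := by
  refine resolves_of_forall_notMem hG fun u hu v hv huv => ?_
  rw [Set.notMem_compl_iff] at hu hv
  obtain ⟨a, -, rfl⟩ := hu
  obtain ⟨b, -, rfl⟩ := hv
  obtain ⟨w, hwR, hw⟩ := hR a b (fun h => huv (congrArg Subtype.val h))
  refine ⟨w, fun ⟨w', hw'R, hw'⟩ => hw'R (Subtype.ext hw' ▸ hwR), fun h => hw ?_⟩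
  rw [dist_induce_eq_min_two hG hH hle, dist_induce_eq_min_two hG hH hle, h]

theorem ncard_compl_image_compl [Finite V] {s : Set V} (R : Set s) :
    (Subtype.val '' Rᶜ)ᶜ.ncard = Nat.card V - (Nat.card s - R.ncard) := by
  rw [Set.ncard_compl, Set.ncard_image_of_injective _ Subtype.val_injective, Set.ncard_compl]

end

theorem metricDim_le_of_induced_diam_two_general
    {V : Type*} [Fintype V] (G : SimpleGraph V) (hG : G.Connected)
    (s : Set V) (t : ℕ)
    (hdiam : diamEq (G.induce s) 2)
    (hbeta : metricDim (G.induce s) = Nat.card s - t) :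
    metricDim G ≤ Fintype.card V - t := by
  obtain ⟨hH, hle, u, v, huv⟩ := hdiam
  obtain ⟨R, hR, hRcard⟩ := exists_resolves_ncard_eq_metricDim hH
  have hu_ne_v : u ≠ v := fun h => by simp [h] at huv
  have hR_pos : 0 < R.ncard := (hR.nonempty hu_ne_v).ncard_pos
  have hs_le : Nat.card s ≤ Nat.card V := Set.ncard_le_card s
  calc metricDim G ≤ (Subtype.val '' Rᶜ)ᶜ.ncard :=
        metricDim_le_ncard (resolves_compl_image_compl hG hH hle hR)
    _ = Fintype.card V - t := by
        rw [ncard_compl_image_compl, ← Nat.card_eq_fintype_card]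
        omega

/-- If `H = G[s]` is an induced subgraph of a connected graph `G` with
`diam(H) = 2` and `β(H) = n(H) - t` for some positive `t`, then `β(G) ≤ n(G) - t`. -/
theorem metricDim_le_of_induced_diam_two
    {V : Type*} [Fintype V] (G : SimpleGraph V) (hG : G.Connected)
    (s : Set V) (t : ℕ) (ht : 0 < t)
    (hdiam : diamEq (G.induce s) 2)
    (hbeta : metricDim (G.induce s) = Nat.card s - t) :
    metricDim G ≤ Fintype.card V - t :=
  metricDim_le_of_induced_diam_two_general G hG s t hdiam hbeta

end PaperMetricDim
end

section
/- Let G be a connected simple graph of order n with diam(G) = 2 and β(G) = n − 3. Then for each vertex v of G with Γ_2(v) ≠ ∅, at least one of the sets Γ_1(v) and Γ_2(v) is homogeneous. -/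
namespace PaperMetricDim

open SimpleGraph

variable {V : Type*}

/-! If neither `Γ₁(v)` nor `Γ₂(v)` is homogeneous, each contains vertices `x, y` and a
third vertex `z` adjacent to `x` but not to `y`. Deleting the four vertices `x₁, y₁, x₂, y₂`
leaves a resolving set: every other vertex resolves itself, `z₁` and `z₂` separate the pairs
inside a level, and `v` separates vertices at different levels. Hence `β(G) ≤ n - 4`. -/

structure InhomogeneousTriple (G : SimpleGraph V) (S : Set V) (x y z : V) : Prop where
  left_mem : x ∈ S
  right_mem : y ∈ S
  mem : z ∈ S
  ne_right : z ≠ y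
  adj_left : G.Adj z x
  not_adj_right : ¬ G.Adj z y

section

variable {G : SimpleGraph V}

lemma exists_inhomogeneousTriple_of_not_homogeneous {S : Set V} (h : ¬ Homogeneous G S) :
    ∃ x y z, InhomogeneousTriple G S x y z := by
  obtain ⟨⟨a, ha, b, hb, hab, hnab⟩, ⟨e, he, f, hf, hef⟩⟩ :
      (∃ a ∈ S, ∃ b ∈ S, a ≠ b ∧ ¬ G.Adj a b) ∧ ∃ e ∈ S, ∃ f ∈ S, G.Adj e f := by
    simpa [Homogeneous, not_or] using h
  by_cases ha' : ∃ x ∈ S, G.Adj a x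
  · obtain ⟨x, hx, hax⟩ := ha'
    exact ⟨x, b, a, hx, hb, ha, hab, hax, hnab⟩
  · push Not at ha'
    exact ⟨f, a, e, hf, ha, he, fun hea => ha' f hf (hea ▸ hef), hef,
      fun hea => ha' e he hea.symm⟩

namespace InhomogeneousTriple

variable {S : Set V} {x y z : V}

lemma left_ne_right (h : InhomogeneousTriple G S x y z) : x ≠ y := by
  rintro rfl
  exact h.not_adj_right h.adj_left

lemma pair_subset (h : InhomogeneousTriple G S x y z) : {x, y} ⊆ S :=
  Set.insert_subset h.left_mem (Set.singleton_subset_iff.mpr h.right_mem)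

lemma notMem_pair (h : InhomogeneousTriple G S x y z) : z ∉ ({x, y} : Set V) := by
  rintro (rfl | rfl)
  · exact h.adj_left.ne rfl
  · exact h.ne_right rfl

lemma dist_ne (h : InhomogeneousTriple G S x y z) :
    ∀ u ∈ ({x, y} : Set V), ∀ u' ∈ ({x, y} : Set V), u ≠ u' →
      G.dist u z ≠ G.dist u' z := by
  have key : G.dist x z ≠ G.dist y z := by
    rw [dist_eq_one_iff_adj.mpr h.adj_left.symm]
    exact fun hy => h.not_adj_right (dist_eq_one_iff_adj.mp hy.symm).symm
  rintro u (rfl | rfl) u' (rfl | rfl) hne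
  exacts [absurd rfl hne, key, key.symm, absurd rfl hne]

end InhomogeneousTriple

lemma disjoint_Gamma {i j : ℕ} (hij : i ≠ j) (v : V) : Disjoint (Gamma G i v) (Gamma G j v) :=
  Set.disjoint_left.mpr fun _ hi hj => hij (hi.symm.trans hj)

lemma InhomogeneousTriple.center_notMem_pair (hconn : G.Connected) {v x y z : V} {i : ℕ}
    (h : InhomogeneousTriple G (Gamma G i v) x y z) : v ∉ ({x, y} : Set V) := by
  intro hv
  have hi : i = 0 := (h.pair_subset hv).symm.trans dist_self
  have hx : x = v := hconn.dist_eq_zero_iff.mp (hi ▸ h.left_mem)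
  have hy : y = v := hconn.dist_eq_zero_iff.mp (hi ▸ h.right_mem)
  exact h.left_ne_right (hx.trans hy.symm)

lemma resolves_compl (hconn : G.Connected) {T : Set V}
    (hT : ∀ u ∈ T, ∀ u' ∈ T, u ≠ u' → ∃ w ∈ Tᶜ, G.dist u w ≠ G.dist u' w) :
    Resolves G Tᶜ := by
  intro u u' hne
  by_cases hu : u ∈ T
  · by_cases hu' : u' ∈ T
    · exact hT u hu u' hu' hne
    · exact ⟨u', hu', by rw [dist_self]; exact mt hconn.dist_eq_zero_iff.mp hne⟩
  · refine ⟨u, hu, ?_⟩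
    rw [dist_self]
    exact fun h => hne (hconn.dist_eq_zero_iff.mp h.symm).symm

lemma metricDim_add_ncard_le [Finite V] {T : Set V} (h : Resolves G Tᶜ) :
    metricDim G + T.ncard ≤ Nat.card V := by
  have hdim : metricDim G ≤ Tᶜ.ncard := Nat.sInf_le ⟨Tᶜ, h, rfl⟩
  have := T.ncard_add_ncard_compl
  omega

lemma InhomogeneousTriple.resolves_compl_union (hconn : G.Connected)
    {v x₁ y₁ z₁ x₂ y₂ z₂ : V} {i j : ℕ} (hij : i ≠ j)
    (h₁ : InhomogeneousTriple G (Gamma G i v) x₁ y₁ z₁)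
    (h₂ : InhomogeneousTriple G (Gamma G j v) x₂ y₂ z₂) :
    Resolves G ({x₁, y₁} ∪ {x₂, y₂})ᶜ := by
  have hdisj := disjoint_Gamma (G := G) hij v
  have hv : v ∉ ({x₁, y₁} ∪ {x₂, y₂} : Set V) := by
    rintro (hv | hv)
    exacts [h₁.center_notMem_pair hconn hv, h₂.center_notMem_pair hconn hv]
  have hz₁ : z₁ ∉ ({x₁, y₁} ∪ {x₂, y₂} : Set V) := by
    rintro (hz | hz)
    exacts [h₁.notMem_pair hz, hdisj.notMem_of_mem_left h₁.mem (h₂.pair_subset hz)]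
  have hz₂ : z₂ ∉ ({x₁, y₁} ∪ {x₂, y₂} : Set V) := by
    rintro (hz | hz)
    exacts [hdisj.notMem_of_mem_right h₂.mem (h₁.pair_subset hz), h₂.notMem_pair hz]
  refine resolves_compl hconn ?_
  rintro u (hu | hu) u' (hu' | hu') hne
  · exact ⟨z₁, hz₁, h₁.dist_ne u hu u' hu' hne⟩
  · refine ⟨v, hv, ?_⟩
    rw [(h₁.pair_subset hu : G.dist u v = i), (h₂.pair_subset hu' : G.dist u' v = j)]
    exact hij
  · refine ⟨v, hv, ?_⟩
    rw [(h₂.pair_subset hu : G.dist u v = j), (h₁.pair_subset hu' : G.dist u' v = i)]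
    exact hij.symm
  · exact ⟨z₂, hz₂, h₂.dist_ne u hu u' hu' hne⟩

end

theorem gamma_one_or_gamma_two_homogeneous_general
    {V : Type*} [Fintype V] (G : SimpleGraph V)
    (hdiam : diamEq G 2)
    (hbeta : metricDim G = Fintype.card V - 3)
    (v : V) :
    Homogeneous G (Gamma G 1 v) ∨ Homogeneous G (Gamma G 2 v) := by
  by_contra! h
  obtain ⟨x₁, y₁, z₁, h₁⟩ := exists_inhomogeneousTriple_of_not_homogeneous h.1
  obtain ⟨x₂, y₂, z₂, h₂⟩ := exists_inhomogeneousTriple_of_not_homogeneous h.2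
  have hdisj : Disjoint ({x₁, y₁} : Set V) {x₂, y₂} :=
    (disjoint_Gamma (by decide) v).mono h₁.pair_subset h₂.pair_subset
  have hcard : ({x₁, y₁} ∪ {x₂, y₂} : Set V).ncard = 4 := by
    rw [Set.ncard_union_eq hdisj,
      Set.ncard_pair h₁.left_ne_right, Set.ncard_pair h₂.left_ne_right]
  have hle := metricDim_add_ncard_le (h₁.resolves_compl_union hdiam.1 (by decide) h₂)
  rw [hcard, hbeta, Nat.card_eq_fintype_card] at hle
  omega

/-- If `G` is connected of order `n` with diameter 2 and `β(G) = n - 3`, then for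
every vertex `v` with `Γ_2(v) ≠ ∅`, at least one of `Γ_1(v)`, `Γ_2(v)` is
homogeneous. -/
theorem gamma_one_or_gamma_two_homogeneous
    {V : Type*} [Fintype V] (G : SimpleGraph V)
    (hdiam : diamEq G 2)
    (hbeta : metricDim G = Fintype.card V - 3)
    (v : V) (hv : (Gamma G 2 v).Nonempty) :
    Homogeneous G (Gamma G 1 v) ∨ Homogeneous G (Gamma G 2 v) :=
  gamma_one_or_gamma_two_homogeneous_general G hdiam hbeta v

end PaperMetricDim
end

section
/- Let G be a connected simple graph of order n with diam(G) = 2 and β(G) = n − 3, with twin graph G*, and let v be a vertex of G such that Γ_2^*(v^*) ≠ ∅ and Γ_1(v) is homogeneous. Then |R_1^*(v^*)| ≤ 2. -/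
/-!
Choose one representative `x` in each class of `R₁*(v*)` and let `S` consist of `v` and these
representatives. Every pair in `S` is distinguished by the adjacency of some vertex outside the
closed neighbourhood of `v`: the pair `v, x` by a neighbour of `x` at distance 2 from `v`, a pair
`x, y` of non-twins by a vertex adjacent to exactly one of them, which cannot be `v` nor, `Γ₁(v)`
being homogeneous, a neighbour of `v`. Hence the complement of `S` resolves `G`, so
`β(G) ≤ n - 1 - |R₁*(v*)|`.
-/

namespace PaperMetricDim

open SimpleGraph

variable {V : Type*}

section Twins

variable {G : SimpleGraph V}

theorem twinRel_iff {p q : V} :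
    twinRel G p q ↔ ∀ x, x ≠ p → x ≠ q → (G.Adj p x ↔ G.Adj q x) := by
  by_cases hpq : p = q
  · subst hpq
    simp [twinRel]
  simp only [twinRel, Twins, hpq, false_or, ne_eq, not_false_eq_true, true_and, Set.ext_iff,
    Set.mem_sdiff, mem_neighborSet, Set.mem_singleton_iff]
  refine forall_congr' fun x => ⟨fun h hxp hxq => ?_, fun h => ?_⟩
  · simpa [hxp, hxq] using h
  · by_cases hxp : x = p
    · subst hxp
      simp
    by_cases hxq : x = q
    · subst hxq
      simp
    simpa [hxp, hxq] using h hxp hxq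

theorem twinRel_equivalence : Equivalence (twinRel G) where
  refl _ := Or.inl rfl
  symm {p q} h := twinRel_iff.2 fun x hxq hxp => (twinRel_iff.1 h x hxp hxq).symm
  trans {a b c} hab hbc := by
    rw [twinRel_iff] at hab hbc ⊢
    intro x hxa hxc
    by_cases hxb : x = b
    · subst hxb
      rcases eq_or_ne a c with rfl | hac
      · rfl
      -- at `x = b` neither relation applies directly: compare both sides with the edge `ac`
      calc G.Adj a x ↔ G.Adj x a := G.adj_comm _ _
        _ ↔ G.Adj c a := hbc a hxa.symm hac
        _ ↔ G.Adj a c := G.adj_comm _ _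
        _ ↔ G.Adj x c := hab c hac.symm hxc.symm
        _ ↔ G.Adj c x := G.adj_comm _ _
    · exact (hab x hxa hxb).trans (hbc x hxb hxc)

theorem mem_cls (v : V) : v ∈ (cls G v).1 := Or.inl rfl

namespace TwinVertex

theorem eq_twinClass_of_mem {A : TwinVertex G} {a : V} (ha : a ∈ A.1) :
    A.1 = twinClass G a := by
  obtain ⟨u, hu⟩ := A.2
  rw [hu] at ha ⊢
  ext x
  exact ⟨twinRel_equivalence.trans (twinRel_equivalence.symm ha), twinRel_equivalence.trans ha⟩

theorem twinRel_of_mem_of_mem {A : TwinVertex G} {a a' : V} (ha : a ∈ A.1) (ha' : a' ∈ A.1) :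
    twinRel G a a' := by
  rw [eq_twinClass_of_mem ha] at ha'
  exact ha'

theorem eq_of_mem_of_mem {A B : TwinVertex G} {a : V} (hA : a ∈ A.1) (hB : a ∈ B.1) :
    A = B :=
  Subtype.ext ((eq_twinClass_of_mem hA).trans (eq_twinClass_of_mem hB).symm)

theorem not_twinRel_of_ne {A B : TwinVertex G} (hAB : A ≠ B) {a b : V}
    (ha : a ∈ A.1) (hb : b ∈ B.1) : ¬ twinRel G a b := fun h =>
  hAB (eq_of_mem_of_mem (by rw [eq_twinClass_of_mem ha]; exact h) hb)

noncomputable def rep (A : TwinVertex G) : V := A.2.choose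

theorem rep_mem (A : TwinVertex G) : A.rep ∈ A.1 := by
  rw [A.2.choose_spec]
  exact mem_cls _

theorem rep_injective : Function.Injective (rep (G := G)) := fun A B h =>
  eq_of_mem_of_mem A.rep_mem (h ▸ B.rep_mem)

end TwinVertex

theorem adj_of_twinGraph_adj {A B : TwinVertex G} (hAB : (twinGraph G).Adj A B)
    {a b : V} (ha : a ∈ A.1) (hb : b ∈ B.1) : G.Adj a b := by
  obtain ⟨hne, a', ha', b', hb', hadj⟩ := hAB
  have hb'a : b' ≠ a := fun h => hne (TwinVertex.eq_of_mem_of_mem ha (h ▸ hb'))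
  have hab : a ≠ b := fun h => hne (TwinVertex.eq_of_mem_of_mem ha (h ▸ hb))
  have hab' : G.Adj a b' :=
    (twinRel_iff.1 (TwinVertex.twinRel_of_mem_of_mem ha ha') b' hb'a hadj.ne').2 hadj
  exact ((twinRel_iff.1 (TwinVertex.twinRel_of_mem_of_mem hb hb') a hab hb'a.symm).2
    hab'.symm).symm

theorem adj_of_mem_GammaStar_one {v x : V} {X : TwinVertex G} (hX : X ∈ GammaStar G 1 v)
    (hx : x ∈ X.1) : G.Adj v x :=
  (adj_of_twinGraph_adj (dist_eq_one_iff_adj.1 hX) hx (mem_cls v)).symm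

theorem ne_and_not_adj_of_mem_GammaStar_two {v w : V} {E : TwinVertex G}
    (hE : E ∈ GammaStar G 2 v) (hw : w ∈ E.1) : w ≠ v ∧ ¬ G.Adj v w := by
  have hE : (twinGraph G).dist E (cls G v) = 2 := hE
  have hEv : E ≠ cls G v := by
    rintro rfl
    simp at hE
  refine ⟨fun h => hEv (TwinVertex.eq_of_mem_of_mem hw (by rw [h]; exact mem_cls v)), fun h => ?_⟩
  have : (twinGraph G).Adj E (cls G v) := ⟨hEv, w, hw, v, mem_cls v, h.symm⟩
  rw [dist_eq_one_iff_adj.2 this] at hE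
  exact absurd hE (by decide)

end Twins

section Resolving

variable {G : SimpleGraph V}

theorem dist_ne_of_not_adj_iff {p q x : V} (h : ¬ (G.Adj p x ↔ G.Adj q x)) :
    G.dist p x ≠ G.dist q x := fun hd =>
  h (by rw [← dist_eq_one_iff_adj, ← dist_eq_one_iff_adj, hd])

theorem resolves_compl_of_adj_separated (hconn : G.Connected) {S : Set V}
    (hS : ∀ p ∈ S, ∀ q ∈ S, p ≠ q → ∃ x ∉ S, ¬ (G.Adj p x ↔ G.Adj q x)) :
    Resolves G Sᶜ := by
  intro u u' hne
  by_cases hu : u ∈ S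
  · by_cases hu' : u' ∈ S
    · obtain ⟨x, hxS, hx⟩ := hS u hu u' hu' hne
      exact ⟨x, hxS, dist_ne_of_not_adj_iff hx⟩
    · exact ⟨u', hu', by rw [dist_self]; exact (hconn.pos_dist_of_ne hne).ne'⟩
  · exact ⟨u, hu, by rw [dist_self]; exact (hconn.pos_dist_of_ne hne.symm).ne⟩

theorem exists_adj_separating_of_homogeneous {v p q : V} (hhom : Homogeneous G (Gamma G 1 v))
    (hp : G.Adj v p) (hq : G.Adj v q) (hpq : ¬ twinRel G p q) :
    ∃ x, x ≠ v ∧ ¬ G.Adj v x ∧ ¬ (G.Adj p x ↔ G.Adj q x) := by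
  obtain ⟨x, hxp, hxq, hx⟩ : ∃ x, x ≠ p ∧ x ≠ q ∧ ¬ (G.Adj p x ↔ G.Adj q x) := by
    simpa [twinRel_iff] using hpq
  refine ⟨x, ?_, fun hvx => hx ?_, hx⟩
  · rintro rfl
    exact hx (iff_of_true hp.symm hq.symm)
  · have mem : ∀ {y}, G.Adj v y → y ∈ Gamma G 1 v := fun h => dist_eq_one_iff_adj.2 h.symm
    rcases hhom with hK | hN
    · exact iff_of_true (hK _ (mem hp) _ (mem hvx) hxp.symm) (hK _ (mem hq) _ (mem hvx) hxq.symm)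
    · exact iff_of_false (hN _ (mem hp) _ (mem hvx)) (hN _ (mem hq) _ (mem hvx))

theorem metricDim_add_ncard_R1Star_lt [Fintype V] (hconn : G.Connected) {v : V}
    (hhom : Homogeneous G (Gamma G 1 v)) :
    metricDim G + (R1Star G v).ncard < Fintype.card V := by
  set T := TwinVertex.rep '' R1Star G v
  have hT : ∀ t ∈ T, G.Adj v t ∧ ∃ e, e ≠ v ∧ ¬ G.Adj v e ∧ G.Adj t e := by
    rintro _ ⟨X, ⟨hX1, E, hE2, hXE⟩, rfl⟩
    obtain ⟨hev, hve⟩ := ne_and_not_adj_of_mem_GammaStar_two hE2 E.rep_mem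
    exact ⟨adj_of_mem_GammaStar_one hX1 X.rep_mem, E.rep, hev, hve,
      adj_of_twinGraph_adj hXE X.rep_mem E.rep_mem⟩
  have hT_not_twin : ∀ t ∈ T, ∀ s ∈ T, t ≠ s → ¬ twinRel G t s := by
    rintro _ ⟨X, -, rfl⟩ _ ⟨Y, -, rfl⟩ hne
    exact TwinVertex.not_twinRel_of_ne (fun h => hne (congrArg TwinVertex.rep h)) X.rep_mem Y.rep_mem
  have hout : ∀ x, x ≠ v → ¬ G.Adj v x → x ∉ insert v T := by
    rintro x hxv hvx (rfl | hx)
    exacts [hxv rfl, hvx (hT x hx).1]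
  have hres : Resolves G (insert v T)ᶜ := by
    refine resolves_compl_of_adj_separated hconn ?_
    rintro p (rfl | hp) q (rfl | hq) hpq
    · exact absurd rfl hpq
    · obtain ⟨-, e, hev, hve, hqe⟩ := hT q hq
      exact ⟨e, hout e hev hve, by simp [hve, hqe]⟩
    · obtain ⟨-, e, hev, hve, hpe⟩ := hT p hp
      exact ⟨e, hout e hev hve, by simp [hve, hpe]⟩
    · obtain ⟨x, hxv, hvx, hx⟩ := exists_adj_separating_of_homogeneous hhom (hT p hp).1
        (hT q hq).1 (hT_not_twin p hp q hq hpq)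
      exact ⟨x, hout x hxv hvx, hx⟩
  have hcard : (insert v T).ncard = (R1Star G v).ncard + 1 := by
    rw [Set.ncard_insert_of_notMem fun hv => (hT v hv).1.ne rfl,
      Set.ncard_image_of_injective _ TwinVertex.rep_injective]
  have hsplit := Set.ncard_add_ncard_compl (insert v T)
  rw [Nat.card_eq_fintype_card] at hsplit
  have := metricDim_le_ncard hres
  omega

end Resolving

theorem R1Star_card_le_two_general
    {V : Type*} [Fintype V] (G : SimpleGraph V)
    (hdiam : diamEq G 2)
    (hbeta : metricDim G = Fintype.card V - 3)
    (v : V)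
    (hhom : Homogeneous G (Gamma G 1 v)) :
    (R1Star G v).ncard ≤ 2 := by
  have := metricDim_add_ncard_R1Star_lt hdiam.1 hhom
  omega

/-- If `G` is connected of order `n`, `diam(G) = 2`, `β(G) = n - 3`, and `v` is a
vertex with `Γ_2^*(v^*) ≠ ∅` and `Γ_1(v)` homogeneous, then `|R_1^*(v^*)| ≤ 2`. -/
theorem R1Star_card_le_two
    {V : Type*} [Fintype V] (G : SimpleGraph V)
    (hdiam : diamEq G 2)
    (hbeta : metricDim G = Fintype.card V - 3)
    (v : V) (h2 : (GammaStar G 2 v).Nonempty)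
    (hhom : Homogeneous G (Gamma G 1 v)) :
    (R1Star G v).ncard ≤ 2 :=
  R1Star_card_le_two_general G hdiam hbeta v hhom

end PaperMetricDim
end

section
/- Let G be a connected simple graph of order n with diam(G) = 2 and β(G) = n − 3, with twin graph G*, and let v be a vertex of G such that Γ_2^*(v^*) ≠ ∅ and Γ_1(v) is homogeneous. Then |Γ_2^*(v^*)| ≤ 3. -/
namespace PaperMetricDim

open SimpleGraph

variable {V : Type*}

/-!
Write `x ≡_S y` (`SameNbrsOff G S x y`) when `x` and `y` have the same neighbours outside `S`.
A vertex outside `S` adjacent to exactly one of `x, y` has distance `1` to one of them and not to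
the other, so if no two vertices of `S` satisfy `x ≡_S y` then `Sᶜ` resolves `G`. Hence
`β(G) = n - 3` forces a pair `x ≡_S y` in every set `S` of four vertices.

Pick representatives `a, b, c, d` of four classes of `Γ₂*(v*)`: they are pairwise non-twins,
non-adjacent to `v` and not twins of `v`. If some triple `T` of them has no pair `x ≡_T y`, the
quadruple `T ∪ {v}` forces `v ≡ x` for some `x ∈ T`; testing the quadruples `T' ∪ {w}` for common
neighbours `w` of `v` and the other two vertices of `T` then produces a quadruple with no such
pair. Otherwise every triple has such a pair, and no pair serves two triples (it would be a pair
of twins), so all four vertices have the same neighbours outside `{a, b, c, d}`. They then induce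
a twin-free graph on four vertices, that is a path, and its two middle vertices together with `v`
and a common neighbour of `v` and `a` form a quadruple with no such pair.
-/

section Neighbours

variable {G : SimpleGraph V} {S T : Set V} {t x y z : V}

def SameNbrsOff (G : SimpleGraph V) (S : Set V) (x y : V) : Prop :=
  G.neighborSet x \ S = G.neighborSet y \ S

theorem sameNbrsOff_iff : SameNbrsOff G S x y ↔ ∀ t ∉ S, (G.Adj x t ↔ G.Adj y t) := by
  simp only [SameNbrsOff, Set.ext_iff, Set.mem_sdiff, mem_neighborSet]
  exact forall_congr' fun t => by by_cases ht : t ∈ S <;> simp [ht]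

namespace SameNbrsOff

theorem adj_iff (h : SameNbrsOff G S x y) (ht : t ∉ S) : G.Adj x t ↔ G.Adj y t :=
  sameNbrsOff_iff.mp h t ht

theorem symm (h : SameNbrsOff G S x y) : SameNbrsOff G S y x := Eq.symm h

theorem trans (h : SameNbrsOff G S x y) (h' : SameNbrsOff G S y z) : SameNbrsOff G S x z :=
  Eq.trans h h'

theorem mono (h : SameNbrsOff G S x y) (hST : S ⊆ T) : SameNbrsOff G T x y :=
  sameNbrsOff_iff.mpr fun _ ht => h.adj_iff fun hs => ht (hST hs)

theorem inter (h : SameNbrsOff G S x y) (h' : SameNbrsOff G T x y) :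
    SameNbrsOff G (S ∩ T) x y := by
  rw [SameNbrsOff, Set.sdiff_inter, Set.sdiff_inter, h, h']

theorem of_insert (h : SameNbrsOff G (insert t S) x y) (ht : G.Adj x t ↔ G.Adj y t) :
    SameNbrsOff G S x y := by
  refine sameNbrsOff_iff.mpr fun s hs => ?_
  by_cases hst : s = t
  · exact hst ▸ ht
  · exact h.adj_iff (by simp [hst, hs])

end SameNbrsOff

theorem twinRel_iff_sameNbrsOff : twinRel G x y ↔ SameNbrsOff G {x, y} x y := by
  rw [sameNbrsOff_iff]
  by_cases hxy : x = y
  · simp [twinRel, hxy]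
  simp only [twinRel, Twins, hxy, ne_eq, not_false_eq_true, true_and, false_or, Set.ext_iff,
    Set.mem_sdiff, mem_neighborSet, Set.mem_singleton_iff, Set.mem_insert_iff, not_or]
  refine forall_congr' fun t => ?_
  by_cases htx : t = x
  · subst htx; simp
  by_cases hty : t = y
  · subst hty; simp
  simp [htx, hty]

namespace SameNbrsOff

theorem exists_not_adj_iff (h : SameNbrsOff G S x y) (hxy : ¬twinRel G x y) :
    ∃ t ∈ S, t ≠ x ∧ t ≠ y ∧ ¬(G.Adj x t ↔ G.Adj y t) := by
  by_contra! hS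
  refine hxy (twinRel_iff_sameNbrsOff.mpr (sameNbrsOff_iff.mpr fun t ht => ?_))
  simp only [Set.mem_insert_iff, Set.mem_singleton_iff, not_or] at ht
  by_cases htS : t ∈ S
  · exact hS t htS ht.1 ht.2
  · exact h.adj_iff htS

theorem not_adj_iff (h : SameNbrsOff G S x y) (hxy : ¬twinRel G x y) (hS : S ⊆ {x, y, z}) :
    ¬(G.Adj x z ↔ G.Adj y z) := by
  obtain ⟨t, ht, htx, hty, hne⟩ := h.exists_not_adj_iff hxy
  obtain rfl : t = z := by rcases hS ht with rfl | rfl | rfl <;> trivial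
  exact hne

theorem not_adj_iff_or (h : SameNbrsOff G S x y) (hxy : ¬twinRel G x y)
    (hS : S ⊆ {x, y, z, t}) : ¬(G.Adj x z ↔ G.Adj y z) ∨ ¬(G.Adj x t ↔ G.Adj y t) := by
  obtain ⟨s, hs, hsx, hsy, hne⟩ := h.exists_not_adj_iff hxy
  rcases hS hs with rfl | rfl | rfl | rfl
  exacts [absurd rfl hsx, absurd rfl hsy, .inl hne, .inr hne]

end SameNbrsOff

end Neighbours

section TwinClass

variable {G : SimpleGraph V} {A B : TwinVertex G} {x y z : V}

theorem ne_of_not_twinRel (h : ¬twinRel G x y) : x ≠ y := fun hxy => h (Or.inl hxy)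

theorem twinRel_symm (h : twinRel G x y) : twinRel G y x := by
  rw [twinRel_iff_sameNbrsOff] at *
  exact (Set.pair_comm x y ▸ h).symm

theorem not_twinRel_symm (h : ¬twinRel G x y) : ¬twinRel G y x := fun h' => h (twinRel_symm h')

theorem twinRel_trans (h : twinRel G x y) (h' : twinRel G y z) : twinRel G x z := by
  rcases eq_or_ne x y with rfl | hxy
  · exact h'
  rcases eq_or_ne x z with rfl | hxz
  · exact Or.inl rfl
  rw [twinRel_iff_sameNbrsOff, sameNbrsOff_iff] at *
  simp only [Set.mem_insert_iff, Set.mem_singleton_iff, not_or] at *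
  intro t ⟨htx, htz⟩
  by_cases hty : t = y
  · subst hty
    have hz := h z ⟨hxz.symm, Ne.symm htz⟩
    have hx := h' x ⟨hxy, hxz⟩
    rw [G.adj_comm x z, G.adj_comm t z] at hz
    rw [G.adj_comm t x] at hx
    tauto
  · exact (h t ⟨htx, hty⟩).trans (h' t ⟨hty, htz⟩)

theorem twinClass_eq_of_twinRel (h : twinRel G x y) : twinClass G x = twinClass G y :=
  Set.ext fun _ => ⟨twinRel_trans (twinRel_symm h), twinRel_trans h⟩

theorem TwinVertex.eq_of_twinRel (hx : x ∈ A.1) (hy : y ∈ B.1) (h : twinRel G x y) : A = B := by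
  obtain ⟨x₀, hA⟩ := A.2
  obtain ⟨y₀, hB⟩ := B.2
  rw [hA] at hx
  rw [hB] at hy
  exact Subtype.ext (by
    rw [hA, hB, twinClass_eq_of_twinRel (twinRel_trans (twinRel_trans hx h) (twinRel_symm hy))])

/-- `x*` is at distance at least `2` from `v*` in the twin graph. -/
def Far (G : SimpleGraph V) (v x : V) : Prop := ¬G.Adj v x ∧ ¬twinRel G v x

theorem exists_far_mem_of_mem_gammaStar {v : V} (hA : A ∈ GammaStar G 2 v) :
    ∃ a ∈ A.1, Far G v a := by
  obtain ⟨a, hA₁⟩ := A.2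
  have ha : a ∈ A.1 := hA₁ ▸ Or.inl rfl
  have hne : A ≠ cls G v := by
    rintro rfl
    simp [GammaStar] at hA
  refine ⟨a, ha, fun hva => ?_, fun hva => hne (TwinVertex.eq_of_twinRel ha
    (show v ∈ (cls G v).1 from Or.inl rfl) (twinRel_symm hva))⟩
  have h₁ : (twinGraph G).dist A (cls G v) = 1 :=
    dist_eq_one_iff_adj.mpr ⟨hne, a, ha, v, Or.inl rfl, hva.symm⟩
  have h₂ : (twinGraph G).dist A (cls G v) = 2 := hA
  omega

end TwinClass

section Resolving

variable {G : SimpleGraph V} {S : Set V}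

theorem resolves_compl_s11 (hconn : G.Connected)
    (hS : ∀ x ∈ S, ∀ y ∈ S, x ≠ y → ¬SameNbrsOff G S x y) : Resolves G Sᶜ := by
  intro x y hxy
  by_cases hx : x ∈ S
  · by_cases hy : y ∈ S
    · obtain ⟨t, ht, hxyt⟩ : ∃ t ∉ S, ¬(G.Adj x t ↔ G.Adj y t) := by
        simpa [sameNbrsOff_iff] using hS x hx y hy hxy
      refine ⟨t, ht, fun hd => hxyt ?_⟩
      rw [← dist_eq_one_iff_adj, ← dist_eq_one_iff_adj, hd]
    · exact ⟨y, hy, by rw [dist_self]; exact fun h => hxy (hconn.dist_eq_zero_iff.mp h)⟩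
  · refine ⟨x, hx, ?_⟩
    rw [dist_self]
    exact fun h => hxy (hconn.dist_eq_zero_iff.mp h.symm).symm

theorem metricDim_le_ncard_s11 (h : Resolves G S) : metricDim G ≤ S.ncard :=
  Nat.sInf_le ⟨S, h, rfl⟩

def Unseparated (G : SimpleGraph V) (a b c d : V) : Prop :=
  SameNbrsOff G {a, b, c, d} a b ∨ SameNbrsOff G {a, b, c, d} a c ∨
    SameNbrsOff G {a, b, c, d} a d ∨ SameNbrsOff G {a, b, c, d} b c ∨
    SameNbrsOff G {a, b, c, d} b d ∨ SameNbrsOff G {a, b, c, d} c d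

theorem unseparated_of_metricDim [Fintype V] (hconn : G.Connected)
    (hβ : metricDim G = Fintype.card V - 3) (a b c d : V) : Unseparated G a b c d := by
  by_contra h
  simp only [Unseparated, not_or] at h
  obtain ⟨hab, hac, had, hbc, hbd, hcd⟩ := h
  have hres : Resolves G {a, b, c, d}ᶜ := resolves_compl_s11 hconn (by
    intro x hx y hy hxy
    simp only [Set.mem_insert_iff, Set.mem_singleton_iff] at hx hy
    rcases hx with rfl | rfl | rfl | rfl <;> rcases hy with rfl | rfl | rfl | rfl <;>
      first
      | exact absurd rfl hxy
      | assumption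
      | exact fun h => ‹¬SameNbrsOff G _ _ _› h.symm)
  have hne : ∀ {x y : V}, ¬SameNbrsOff G {a, b, c, d} x y → x ≠ y := by
    rintro x y h rfl
    exact h rfl
  have hcard : ({a, b, c, d} : Set V).ncard = 4 := by
    rw [Set.ncard_insert_of_notMem (by simp [hne hab, hne hac, hne had]),
      Set.ncard_insert_of_notMem (by simp [hne hbc, hne hbd]), Set.ncard_pair (hne hcd)]
  have hcompl := Set.ncard_add_ncard_compl ({a, b, c, d} : Set V)
  rw [Nat.card_eq_fintype_card] at hcompl
  have := metricDim_le_ncard_s11 hres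
  omega

theorem exists_adj_adj_of_dist_le_two (hconn : G.Connected) (hd : ∀ x y, G.dist x y ≤ 2)
    {x y : V} (hxy : x ≠ y) (hadj : ¬G.Adj x y) : ∃ w, G.Adj x w ∧ G.Adj y w := by
  have h2 : G.dist x y = 2 := by
    have h0 : G.dist x y ≠ 0 := fun h => hxy (hconn.dist_eq_zero_iff.mp h)
    have h1 : G.dist x y ≠ 1 := fun h => hadj (dist_eq_one_iff_adj.mp h)
    have := hd x y
    omega
  have he : G.edist x y = 2 := by
    rw [← (hconn.preconnected x y).coe_dist_eq_edist, h2]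
    rfl
  obtain ⟨w, hw⟩ := (edist_eq_two_iff.mp he).2.2
  exact ⟨w, G.mem_commonNeighbors.mp hw⟩

end Resolving

section FarQuadruple

variable {G : SimpleGraph V} {S U : Set V} {v w w₁ w₂ a b c d : V}

def Unseparated3 (G : SimpleGraph V) (S : Set V) (a b c : V) : Prop :=
  SameNbrsOff G S a b ∨ SameNbrsOff G S a c ∨ SameNbrsOff G S b c

theorem Unseparated3.swap (h : Unseparated3 G S a b c) : Unseparated3 G S b a c := by
  rcases h with h | h | h
  exacts [.inl h.symm, .inr (.inr h), .inr (.inl h)]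

theorem Unseparated3.rotate (h : Unseparated3 G S a b c) : Unseparated3 G S c a b := by
  rcases h with h | h | h
  exacts [.inr (.inr h), .inl h.symm, .inr (.inl h.symm)]

theorem unseparated3_or_sameNbrsOff (hG : ∀ a b c d : V, Unseparated G a b c d)
    (ha : ¬G.Adj v a) (hb : ¬G.Adj v b) (hc : ¬G.Adj v c) :
    Unseparated3 G {a, b, c} a b c ∨ SameNbrsOff G {v, a, b, c} v a ∨
      SameNbrsOff G {v, a, b, c} v b ∨ SameNbrsOff G {v, a, b, c} v c := by
  have hv : ∀ {x y}, ¬G.Adj v x → ¬G.Adj v y → (G.Adj x v ↔ G.Adj y v) := fun hx hy =>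
    iff_of_false (fun h => hx h.symm) (fun h => hy h.symm)
  rcases hG v a b c with h | h | h | h | h | h
  · exact .inr (.inl h)
  · exact .inr (.inr (.inl h))
  · exact .inr (.inr (.inr h))
  · exact .inl (.inl (h.of_insert (hv ha hb)))
  · exact .inl (.inr (.inl (h.of_insert (hv ha hc))))
  · exact .inl (.inr (.inr (h.of_insert (hv hb hc))))

theorem unseparated3_insert_of_adj (hG : ∀ a b c d : V, Unseparated G a b c d)
    (hvw : G.Adj v w) (ha : Far G v a) (hb : Far G v b) (hc : Far G v c) :
    Unseparated3 G {w, a, b, c} a b c := by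
  have hvS : v ∉ ({w, a, b, c} : Set V) := by
    simp [hvw.ne, ne_of_not_twinRel ha.2, ne_of_not_twinRel hb.2, ne_of_not_twinRel hc.2]
  have hw : ∀ {x}, ¬G.Adj v x → ¬SameNbrsOff G {w, a, b, c} w x := fun hx h =>
    hx ((h.adj_iff hvS).mp hvw.symm).symm
  rcases hG w a b c with h | h | h | h | h | h
  · exact absurd h (hw ha.1)
  · exact absurd h (hw hb.1)
  · exact absurd h (hw hc.1)
  · exact .inl h
  · exact .inr (.inl h)
  · exact .inr (.inr h)

theorem exists_nbrs_separating (hG : ∀ a b c d : V, Unseparated G a b c d)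
    (hnbr : ∀ x y, x ≠ y → ¬G.Adj x y → ∃ w, G.Adj x w ∧ G.Adj y w)
    (ha : Far G v a) (hb : Far G v b) (hc : Far G v c)
    (hsame : SameNbrsOff G {v, a, b, c} v c) (habc : ¬Unseparated3 G {a, b, c} a b c) :
    ∃ w₁ w₂, G.Adj v w₁ ∧ G.Adj v w₂ ∧ G.Adj a w₁ ∧ ¬G.Adj b w₁ ∧ ¬G.Adj a w₂ ∧
      G.Adj b w₂ ∧ SameNbrsOff G {w₂, a, b, c} a c := by
  obtain ⟨nab, nac, nbc⟩ : ¬SameNbrsOff G {a, b, c} a b ∧ ¬SameNbrsOff G {a, b, c} a c ∧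
      ¬SameNbrsOff G {a, b, c} b c := by simpa [Unseparated3, not_or] using habc
  have hva := ha.1
  have hvb := hb.1
  have hvc := hc.1
  have hvv : ¬G.Adj v v := G.irrefl
  have hcw : ∀ {w}, G.Adj v w → G.Adj c w := fun hw =>
    (hsame.adj_iff (by rintro (rfl | rfl | rfl | rfl) <;> contradiction)).mp hw
  -- each `w ∈ N(v)` tells apart the pair that `{w, a, b, c}` leaves unseparated
  have sep : ∀ {w x y}, SameNbrsOff G {w, a, b, c} x y → ¬SameNbrsOff G {a, b, c} x y →
      ¬(G.Adj x w ↔ G.Adj y w) := fun h h' hw => h' (h.of_insert hw)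
  obtain ⟨w₁, hvw₁, haw₁⟩ := hnbr v a (ne_of_not_twinRel ha.2) hva
  obtain ⟨w₂, hvw₂, hbw₂⟩ := hnbr v b (ne_of_not_twinRel hb.2) hvb
  have hbw₁ : ¬G.Adj b w₁ := by
    rcases unseparated3_insert_of_adj hG hvw₁ ha hb hc with h | h | h
    · exact fun hb => sep h nab (iff_of_true haw₁ hb)
    · exact absurd (iff_of_true haw₁ (hcw hvw₁)) (sep h nac)
    · exact fun hb => sep h nbc (iff_of_true hb (hcw hvw₁))
  obtain ⟨haw₂, h₂⟩ : ¬G.Adj a w₂ ∧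
      (SameNbrsOff G {w₂, a, b, c} a b ∨ SameNbrsOff G {w₂, a, b, c} a c) := by
    rcases unseparated3_insert_of_adj hG hvw₂ ha hb hc with h | h | h
    · exact ⟨fun ha => sep h nab (iff_of_true ha hbw₂), .inl h⟩
    · exact ⟨fun ha => sep h nac (iff_of_true ha (hcw hvw₂)), .inr h⟩
    · exact absurd (iff_of_true hbw₂ (hcw hvw₂)) (sep h nbc)
  refine ⟨w₁, w₂, hvw₁, hvw₂, haw₁, hbw₁, haw₂, hbw₂, h₂.resolve_left fun h => hbw₁ ?_⟩
  exact (h.adj_iff (by rintro (rfl | rfl | rfl | rfl) <;> contradiction)).mp haw₁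

theorem not_unseparated_of_sameNbrsOff_insert (hvw₁ : G.Adj v w₁) (hw₁₂ : w₁ ≠ w₂)
    (hbw₁ : ¬G.Adj b w₁) (hcw₁ : G.Adj c w₁) (hva : ¬G.Adj v a) (hca : G.Adj c a)
    (hda : ¬G.Adj d a) (tbd : ¬twinRel G b d) (h₁ : SameNbrsOff G {w₁, a, b, d} b d)
    (h₂ : SameNbrsOff G {w₂, a, b, d} b d) (hw₁ : w₁ ∉ ({v, b, c, d} : Set V))
    (ha : a ∉ ({v, b, c, d} : Set V)) : ¬Unseparated G v b c d := by
  have hbda : ¬(G.Adj b a ↔ G.Adj d a) := (h₁.inter h₂).not_adj_iff tbd (by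
    rintro t ⟨rfl | ht, rfl | ht'⟩
    exacts [absurd rfl hw₁₂, ht'.rotate, ht.rotate, ht.rotate])
  have hdw₁ : ¬G.Adj d w₁ := fun h => hbw₁ ((h₂.adj_iff (by
    rintro (rfl | rfl | rfl | rfl)
    exacts [hw₁₂ rfl, hva hvw₁, hw₁ (by simp), hw₁ (by simp)])).mpr h)
  rintro (h | h | h | h | h | h)
  · exact hbw₁ ((h.adj_iff hw₁).mp hvw₁)
  · exact hva ((h.adj_iff ha).mpr hca)
  · exact hdw₁ ((h.adj_iff hw₁).mp hvw₁)
  · exact hbw₁ ((h.adj_iff hw₁).mpr hcw₁)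
  · exact hbda (h.adj_iff ha)
  · exact hda ((h.adj_iff ha).mp hca)

theorem false_of_sameNbrsOff_vertex_of_adj (hG : ∀ a b c d : V, Unseparated G a b c d)
    (hnbr : ∀ x y, x ≠ y → ¬G.Adj x y → ∃ w, G.Adj x w ∧ G.Adj y w)
    (ha : Far G v a) (hb : Far G v b) (hc : Far G v c) (hd : Far G v d)
    (tab : ¬twinRel G a b) (tac : ¬twinRel G a c) (tad : ¬twinRel G a d)
    (tbc : ¬twinRel G b c) (tbd : ¬twinRel G b d) (tcd : ¬twinRel G c d)
    (hsame : SameNbrsOff G {v, a, b, c} v c) (habc : ¬Unseparated3 G {a, b, c} a b c)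
    (hca : G.Adj c a) : False := by
  obtain ⟨w₁, w₂, hvw₁, hvw₂, haw₁, hbw₁, haw₂, hbw₂, hac₂⟩ :=
    exists_nbrs_separating hG hnbr ha hb hc hsame habc
  have ⟨hva, tva⟩ := ha
  have hvb := hb.1
  have hvc := hc.1
  have ⟨hvd, tvd⟩ := hd
  have hvv : ¬G.Adj v v := G.irrefl
  have hw₁₂ : w₁ ≠ w₂ := by rintro rfl; exact haw₂ haw₁
  have := ne_of_not_twinRel tva
  have := ne_of_not_twinRel tvd
  have := ne_of_not_twinRel tab
  have := ne_of_not_twinRel tac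
  have := ne_of_not_twinRel tad
  have := ne_of_not_twinRel tbc
  have := ne_of_not_twinRel tbd
  have := ne_of_not_twinRel tcd
  have hcd : ¬G.Adj c d := fun h =>
    hvd ((hsame.adj_iff (by rintro (rfl | rfl | rfl | rfl) <;> contradiction)).mpr h)
  have hda : ¬G.Adj d a := fun h =>
    hcd ((hac₂.adj_iff (by rintro (rfl | rfl | rfl | rfl) <;> contradiction)).mp h.symm)
  -- `w₁` and `w₂` tell `a` and `b` apart, and `c` tells `a` and `d` apart
  have hbd : ∀ {w w'}, G.Adj v w → ¬(G.Adj a w' ↔ G.Adj b w') → w' ∉ ({w, a, b, d} : Set V) →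
      SameNbrsOff G {w, a, b, d} b d := fun hvw hw' hw'S =>
    (((unseparated3_insert_of_adj hG hvw ha hb hd).resolve_left fun h => hw' (h.adj_iff hw'S))
      ).resolve_left fun h =>
        hcd ((h.adj_iff (by rintro (rfl | rfl | rfl | rfl) <;> contradiction)).mp hca.symm).symm
  refine not_unseparated_of_sameNbrsOff_insert hvw₁ hw₁₂ hbw₁
    ((hsame.adj_iff (by rintro (rfl | rfl | rfl | rfl) <;> contradiction)).mp hvw₁) hva hca hda tbd
    (hbd hvw₁ (fun h => haw₂ (h.mpr hbw₂)) (by rintro (rfl | rfl | rfl | rfl) <;> contradiction))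
    (hbd hvw₂ (fun h => hbw₁ (h.mp haw₁)) (by rintro (rfl | rfl | rfl | rfl) <;> contradiction))
    (by rintro (rfl | rfl | rfl | rfl) <;> contradiction)
    (by rintro (rfl | rfl | rfl | rfl) <;> contradiction) (hG v b c d)

theorem false_of_sameNbrsOff_vertex (hG : ∀ a b c d : V, Unseparated G a b c d)
    (hnbr : ∀ x y, x ≠ y → ¬G.Adj x y → ∃ w, G.Adj x w ∧ G.Adj y w)
    (ha : Far G v a) (hb : Far G v b) (hc : Far G v c) (hd : Far G v d)
    (tab : ¬twinRel G a b) (tac : ¬twinRel G a c) (tad : ¬twinRel G a d)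
    (tbc : ¬twinRel G b c) (tbd : ¬twinRel G b d) (tcd : ¬twinRel G c d)
    (hsame : SameNbrsOff G {v, a, b, c} v c) (habc : ¬Unseparated3 G {a, b, c} a b c) :
    False := by
  obtain ⟨t, ht, htv, htc, hvct⟩ := hsame.exists_not_adj_iff hc.2
  have hct : G.Adj c t := (not_iff.mp hvct).mp fun h => by
    rcases ht with rfl | rfl | rfl | rfl
    exacts [G.irrefl h, ha.1 h, hb.1 h, hc.1 h]
  rcases ht with rfl | rfl | rfl | rfl
  · exact htv rfl
  · exact false_of_sameNbrsOff_vertex_of_adj hG hnbr ha hb hc hd tab tac tad tbc tbd tcd hsame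
      habc hct
  · exact false_of_sameNbrsOff_vertex_of_adj hG hnbr hb ha hc hd (not_twinRel_symm tab) tbc tbd
      tac tad tcd (Set.insert_comm a t {c} ▸ hsame)
      (fun h => habc (Set.insert_comm t a {c} ▸ h.swap)) hct
  · exact htc rfl

theorem unseparated3_of_far (hG : ∀ a b c d : V, Unseparated G a b c d)
    (hnbr : ∀ x y, x ≠ y → ¬G.Adj x y → ∃ w, G.Adj x w ∧ G.Adj y w)
    (ha : Far G v a) (hb : Far G v b) (hc : Far G v c) (hd : Far G v d)
    (tab : ¬twinRel G a b) (tac : ¬twinRel G a c) (tad : ¬twinRel G a d)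
    (tbc : ¬twinRel G b c) (tbd : ¬twinRel G b d) (tcd : ¬twinRel G c d) :
    Unseparated3 G {a, b, c} a b c := by
  by_contra habc
  have e₁ : ({a, b, c} : Set V) = {b, c, a} :=
    Set.ext fun _ => ⟨Or.rotate, fun h => h.rotate.rotate⟩
  have e₂ : ({a, b, c} : Set V) = {c, a, b} :=
    Set.ext fun _ => ⟨fun h => h.rotate.rotate, Or.rotate⟩
  rcases unseparated3_or_sameNbrsOff hG ha.1 hb.1 hc.1 with h | h | h | h
  · exact habc h
  · rw [e₁] at h
    exact false_of_sameNbrsOff_vertex hG hnbr hb hc ha hd tbc (not_twinRel_symm tab) tbd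
      (not_twinRel_symm tac) tcd tad h fun h' => habc (e₁ ▸ h'.rotate)
  · rw [e₂] at h
    exact false_of_sameNbrsOff_vertex hG hnbr hc ha hb hd (not_twinRel_symm tac)
      (not_twinRel_symm tbc) tcd tab tad tbd h fun h' => habc (e₂ ▸ h'.rotate.rotate)
  · exact false_of_sameNbrsOff_vertex hG hnbr ha hb hc hd tab tac tad tbc tbd tcd h habc

theorem Unseparated3.sameNbrsOff_cases (h : Unseparated3 G {a, b, c} a b c)
    (hU : {a, b, c} ⊆ U) (hd : d ∉ ({a, b, c} : Set V))
    (tab : ¬twinRel G a b) (tac : ¬twinRel G a c) (tbc : ¬twinRel G b c) :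
    (SameNbrsOff G U a b ∧ (G.Adj a d ↔ G.Adj b d) ∧ ¬(G.Adj a c ↔ G.Adj b c)) ∨
      (SameNbrsOff G U a c ∧ (G.Adj a d ↔ G.Adj c d) ∧ ¬(G.Adj a b ↔ G.Adj c b)) ∨
      (SameNbrsOff G U b c ∧ (G.Adj b d ↔ G.Adj c d) ∧ ¬(G.Adj b a ↔ G.Adj c a)) := by
  rcases h with h | h | h
  · exact .inl ⟨h.mono hU, h.adj_iff hd, h.not_adj_iff tab subset_rfl⟩
  · exact .inr (.inl ⟨h.mono hU, h.adj_iff hd,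
      h.not_adj_iff tac fun _ h => h.imp_right Or.symm⟩)
  · exact .inr (.inr ⟨h.mono hU, h.adj_iff hd, h.not_adj_iff tbc fun _ => Or.rotate⟩)

theorem sameNbrsOff_of_unseparated3
    (tab : ¬twinRel G a b) (tac : ¬twinRel G a c) (tad : ¬twinRel G a d)
    (tbc : ¬twinRel G b c) (tbd : ¬twinRel G b d) (tcd : ¬twinRel G c d)
    (habc : Unseparated3 G {a, b, c} a b c) (habd : Unseparated3 G {a, b, d} a b d)
    (hacd : Unseparated3 G {a, c, d} a c d) (hbcd : Unseparated3 G {b, c, d} b c d) :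
    SameNbrsOff G {a, b, c, d} a b ∧ SameNbrsOff G {a, b, c, d} a c ∧
      SameNbrsOff G {a, b, c, d} a d := by
  have hab := ne_of_not_twinRel tab
  have hac := ne_of_not_twinRel tac
  have had := ne_of_not_twinRel tad
  have hbc := ne_of_not_twinRel tbc
  have hbd := ne_of_not_twinRel tbd
  have hcd := ne_of_not_twinRel tcd
  -- a pair chosen by two triples would agree on both remaining vertices, hence be twins
  have h₁ := habc.sameNbrsOff_cases (U := {a, b, c, d}) (d := d)
    (by rintro t (rfl | rfl | rfl) <;> simp) (by simp [had.symm, hbd.symm, hcd.symm]) tab tac tbc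
  have h₂ := habd.sameNbrsOff_cases (U := {a, b, c, d}) (d := c)
    (by rintro t (rfl | rfl | rfl) <;> simp) (by simp [hac.symm, hbc.symm, hcd]) tab tad tbd
  have h₃ := hacd.sameNbrsOff_cases (U := {a, b, c, d}) (d := b)
    (by rintro t (rfl | rfl | rfl) <;> simp) (by simp [hab.symm, hbc, hbd]) tac tad tcd
  have h₄ := hbcd.sameNbrsOff_cases (U := {a, b, c, d}) (d := a)
    (by rintro t (rfl | rfl | rfl) <;> simp) (by simp [hab, hac, had]) tbc tbd tcd
  simp only [SameNbrsOff] at h₁ h₂ h₃ h₄ ⊢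
  grind

theorem middle_pair_cases
    (tab : ¬twinRel G a b) (tac : ¬twinRel G a c) (tad : ¬twinRel G a d)
    (tbc : ¬twinRel G b c) (tbd : ¬twinRel G b d) (tcd : ¬twinRel G c d)
    (hab : SameNbrsOff G {a, b, c, d} a b) (hac : SameNbrsOff G {a, b, c, d} a c)
    (had : SameNbrsOff G {a, b, c, d} a d) :
    (¬(G.Adj a c ↔ G.Adj a d) ∧ ¬(G.Adj b c ↔ G.Adj b d) ∧
        (¬(G.Adj a c ↔ G.Adj b c) ∨ ¬(G.Adj a d ↔ G.Adj b d))) ∨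
      (¬(G.Adj a b ↔ G.Adj a d) ∧ ¬(G.Adj c b ↔ G.Adj c d) ∧
        (¬(G.Adj a b ↔ G.Adj c b) ∨ ¬(G.Adj a d ↔ G.Adj c d))) ∨
      (¬(G.Adj a b ↔ G.Adj a c) ∧ ¬(G.Adj d b ↔ G.Adj d c) ∧
        (¬(G.Adj a b ↔ G.Adj d b) ∨ ¬(G.Adj a c ↔ G.Adj d c))) ∨
      (¬(G.Adj b a ↔ G.Adj b d) ∧ ¬(G.Adj c a ↔ G.Adj c d) ∧
        (¬(G.Adj b a ↔ G.Adj c a) ∨ ¬(G.Adj b d ↔ G.Adj c d))) ∨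
      (¬(G.Adj b a ↔ G.Adj b c) ∧ ¬(G.Adj d a ↔ G.Adj d c) ∧
        (¬(G.Adj b a ↔ G.Adj d a) ∨ ¬(G.Adj b c ↔ G.Adj d c))) ∨
      (¬(G.Adj c a ↔ G.Adj c b) ∧ ¬(G.Adj d a ↔ G.Adj d b) ∧
        (¬(G.Adj c a ↔ G.Adj d a) ∨ ¬(G.Adj c b ↔ G.Adj d b))) := by
  have sab := hab.not_adj_iff_or tab (z := c) (t := d) subset_rfl
  have sac := hac.not_adj_iff_or tac (z := b) (t := d)
    (by rintro t (rfl | rfl | rfl | rfl) <;> simp)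
  have sad := had.not_adj_iff_or tad (z := b) (t := c)
    (by rintro t (rfl | rfl | rfl | rfl) <;> simp)
  have sbc := (hab.symm.trans hac).not_adj_iff_or tbc (z := a) (t := d)
    (by rintro t (rfl | rfl | rfl | rfl) <;> simp)
  have sbd := (hab.symm.trans had).not_adj_iff_or tbd (z := a) (t := c)
    (by rintro t (rfl | rfl | rfl | rfl) <;> simp)
  have scd := (hac.symm.trans had).not_adj_iff_or tcd (z := a) (t := b)
    (by rintro t (rfl | rfl | rfl | rfl) <;> simp)
  -- the only twin-free graph on four vertices is the path, whose two middle vertices qualify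
  grind [G.adj_comm]

theorem not_unseparated_of_path_middle {A B C D : V} (hvA : ¬G.Adj v A) (hvD : ¬G.Adj v D)
    (hAw : G.Adj A w) (hDw : G.Adj D w) (hB : ¬(G.Adj B A ↔ G.Adj B D))
    (hC : ¬(G.Adj C A ↔ G.Adj C D))
    (hBC : ¬(G.Adj B A ↔ G.Adj C A) ∨ ¬(G.Adj B D ↔ G.Adj C D))
    (hA : A ∉ ({v, B, C, w} : Set V)) (hD : D ∉ ({v, B, C, w} : Set V)) :
    ¬Unseparated G v B C w := by
  rintro (h | h | h | h | h | h)
  · exact hB (iff_of_false (fun h' => hvA ((h.adj_iff hA).mpr h'))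
      (fun h' => hvD ((h.adj_iff hD).mpr h')))
  · exact hC (iff_of_false (fun h' => hvA ((h.adj_iff hA).mpr h'))
      (fun h' => hvD ((h.adj_iff hD).mpr h')))
  · exact hvA ((h.adj_iff hA).mpr hAw.symm)
  · exact hBC.elim (· (h.adj_iff hA)) (· (h.adj_iff hD))
  · exact hB (iff_of_true ((h.adj_iff hA).mpr hAw.symm) ((h.adj_iff hD).mpr hDw.symm))
  · exact hC (iff_of_true ((h.adj_iff hA).mpr hAw.symm) ((h.adj_iff hD).mpr hDw.symm))

theorem false_of_sameNbrsOff_quad (hG : ∀ a b c d : V, Unseparated G a b c d)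
    (hnbr : ∀ x y, x ≠ y → ¬G.Adj x y → ∃ w, G.Adj x w ∧ G.Adj y w)
    (ha : Far G v a) (hb : Far G v b) (hc : Far G v c) (hd : Far G v d)
    (tab : ¬twinRel G a b) (tac : ¬twinRel G a c) (tad : ¬twinRel G a d)
    (tbc : ¬twinRel G b c) (tbd : ¬twinRel G b d) (tcd : ¬twinRel G c d)
    (hab : SameNbrsOff G {a, b, c, d} a b) (hac : SameNbrsOff G {a, b, c, d} a c)
    (had : SameNbrsOff G {a, b, c, d} a d) : False := by
  have ⟨hva, tva⟩ := ha
  have ⟨hvb, tvb⟩ := hb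
  have ⟨hvc, tvc⟩ := hc
  have ⟨hvd, tvd⟩ := hd
  have := ne_of_not_twinRel tva
  have := ne_of_not_twinRel tvb
  have := ne_of_not_twinRel tvc
  have := ne_of_not_twinRel tvd
  have := ne_of_not_twinRel tab
  have := ne_of_not_twinRel tac
  have := ne_of_not_twinRel tad
  have := ne_of_not_twinRel tbc
  have := ne_of_not_twinRel tbd
  have := ne_of_not_twinRel tcd
  obtain ⟨w, hvw, haw⟩ := hnbr v a (ne_of_not_twinRel tva) hva
  have hwU : w ∉ ({a, b, c, d} : Set V) := by rintro (rfl | rfl | rfl | rfl) <;> contradiction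
  have hbw := (hab.adj_iff hwU).mp haw
  have hcw := (hac.adj_iff hwU).mp haw
  have hdw := (had.adj_iff hwU).mp haw
  rcases middle_pair_cases tab tac tad tbc tbd tcd hab hac had with h | h | h | h | h | h
  · refine not_unseparated_of_path_middle hvc hvd hcw hdw h.1 h.2.1 h.2.2
      (by rintro (rfl | rfl | rfl | rfl) <;> contradiction)
      (by rintro (rfl | rfl | rfl | rfl) <;> contradiction) (hG v a b w)
  · refine not_unseparated_of_path_middle hvb hvd hbw hdw h.1 h.2.1 h.2.2
      (by rintro (rfl | rfl | rfl | rfl) <;> contradiction)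
      (by rintro (rfl | rfl | rfl | rfl) <;> contradiction) (hG v a c w)
  · refine not_unseparated_of_path_middle hvb hvc hbw hcw h.1 h.2.1 h.2.2
      (by rintro (rfl | rfl | rfl | rfl) <;> contradiction)
      (by rintro (rfl | rfl | rfl | rfl) <;> contradiction) (hG v a d w)
  · refine not_unseparated_of_path_middle hva hvd haw hdw h.1 h.2.1 h.2.2
      (by rintro (rfl | rfl | rfl | rfl) <;> contradiction)
      (by rintro (rfl | rfl | rfl | rfl) <;> contradiction) (hG v b c w)
  · refine not_unseparated_of_path_middle hva hvc haw hcw h.1 h.2.1 h.2.2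
      (by rintro (rfl | rfl | rfl | rfl) <;> contradiction)
      (by rintro (rfl | rfl | rfl | rfl) <;> contradiction) (hG v b d w)
  · refine not_unseparated_of_path_middle hva hvb haw hbw h.1 h.2.1 h.2.2
      (by rintro (rfl | rfl | rfl | rfl) <;> contradiction)
      (by rintro (rfl | rfl | rfl | rfl) <;> contradiction) (hG v c d w)

theorem false_of_far (hG : ∀ a b c d : V, Unseparated G a b c d)
    (hnbr : ∀ x y, x ≠ y → ¬G.Adj x y → ∃ w, G.Adj x w ∧ G.Adj y w)
    (ha : Far G v a) (hb : Far G v b) (hc : Far G v c) (hd : Far G v d)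
    (tab : ¬twinRel G a b) (tac : ¬twinRel G a c) (tad : ¬twinRel G a d)
    (tbc : ¬twinRel G b c) (tbd : ¬twinRel G b d) (tcd : ¬twinRel G c d) : False := by
  obtain ⟨hab, hac, had⟩ := sameNbrsOff_of_unseparated3 tab tac tad tbc tbd tcd
    (unseparated3_of_far hG hnbr ha hb hc hd tab tac tad tbc tbd tcd)
    (unseparated3_of_far hG hnbr ha hb hd hc tab tad tac tbd tbc (not_twinRel_symm tcd))
    (unseparated3_of_far hG hnbr ha hc hd hb tac tad tab tcd (not_twinRel_symm tbc)
      (not_twinRel_symm tbd))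
    (unseparated3_of_far hG hnbr hb hc hd ha tbc tbd (not_twinRel_symm tab) tcd
      (not_twinRel_symm tac) (not_twinRel_symm tad))
  exact false_of_sameNbrsOff_quad hG hnbr ha hb hc hd tab tac tad tbc tbd tcd hab hac had

end FarQuadruple

theorem gammaStar_two_card_le_three_general
    {V : Type*} [Fintype V] (G : SimpleGraph V)
    (hdiam : diamEq G 2)
    (hbeta : metricDim G = Fintype.card V - 3)
    (v : V) :
    (GammaStar G 2 v).ncard ≤ 3 := by
  obtain ⟨hconn, hdist, -⟩ := hdiam
  have : Finite (TwinVertex G) := Subtype.finite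
  by_contra! h
  obtain ⟨A, hA, B, hB, C, hC, D, hD, hAB, hAC, hAD, hBC, hBD, hCD⟩ :=
    (Set.three_lt_ncard (Set.toFinite _)).mp h
  obtain ⟨a, haA, ha⟩ := exists_far_mem_of_mem_gammaStar hA
  obtain ⟨b, hbB, hb⟩ := exists_far_mem_of_mem_gammaStar hB
  obtain ⟨c, hcC, hc⟩ := exists_far_mem_of_mem_gammaStar hC
  obtain ⟨d, hdD, hd⟩ := exists_far_mem_of_mem_gammaStar hD
  exact false_of_far (unseparated_of_metricDim hconn hbeta)
    (fun _ _ => exists_adj_adj_of_dist_le_two hconn hdist) ha hb hc hd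
    (fun h => hAB (TwinVertex.eq_of_twinRel haA hbB h))
    (fun h => hAC (TwinVertex.eq_of_twinRel haA hcC h))
    (fun h => hAD (TwinVertex.eq_of_twinRel haA hdD h))
    (fun h => hBC (TwinVertex.eq_of_twinRel hbB hcC h))
    (fun h => hBD (TwinVertex.eq_of_twinRel hbB hdD h))
    (fun h => hCD (TwinVertex.eq_of_twinRel hcC hdD h))

/-- If `G` is connected of order `n`, `diam(G) = 2`, `β(G) = n - 3`, and `v` is a
vertex with `Γ_2^*(v^*) ≠ ∅` and `Γ_1(v)` homogeneous, then `|Γ_2^*(v^*)| ≤ 3`. -/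
theorem gammaStar_two_card_le_three
    {V : Type*} [Fintype V] (G : SimpleGraph V)
    (hdiam : diamEq G 2)
    (hbeta : metricDim G = Fintype.card V - 3)
    (v : V) (h2 : (GammaStar G 2 v).Nonempty)
    (hhom : Homogeneous G (Gamma G 1 v)) :
    (GammaStar G 2 v).ncard ≤ 3 :=
  gammaStar_two_card_le_three_general G hdiam hbeta v

end PaperMetricDim
end
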